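/- arXiv:1602.01011 — 14 statements merged into one kernel-verified Lean document; each statement's English description precedes it below -/
import Mathlib

section
/- If (a,b,c) is a triple of positive integers satisfying a² + b² + c² = 3abc, then the Vieta jump a' = (b²+c²)/a is again a positive integer, and (a',b,c) satisfies a'² + b² + c² = 3a'bc. -/
/-- Vieta jumping on the Markov equation: if `a² + b² + c² = 3abc` in positive
integers, then `a' = (b²+c²)/a` is a positive integer and `(a',b,c)` is again a
solution. -/
theorem markov_vieta_jump (a b c : ℕ) (ha : 0 < a) (hb : 0 < b) (hc : 0 < c)
    (h : a ^ 2 + b ^ 2 + c ^ 2 = 3 * a * b * c) :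
    a ∣ b ^ 2 + c ^ 2 ∧ 0 < (b ^ 2 + c ^ 2) / a ∧
      ((b ^ 2 + c ^ 2) / a) ^ 2 + b ^ 2 + c ^ 2
        = 3 * ((b ^ 2 + c ^ 2) / a) * b * c := by
  set q := 3 * b * c - a with hqdef
  have hle : a ≤ 3 * b * c := by nlinarith
  have hqa : q + a = 3 * b * c := by omega
  have key : a * q = b ^ 2 + c ^ 2 := by nlinarith [hqa]
  have hdvd : a ∣ b ^ 2 + c ^ 2 := ⟨q, key.symm⟩
  have hdiv : (b ^ 2 + c ^ 2) / a = q := by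
    rw [← key, Nat.mul_div_cancel_left _ ha]
  have hqpos : 0 < q := by
    rcases Nat.eq_zero_or_pos q with h0 | h0
    · exfalso; rw [h0, Nat.mul_zero] at key; nlinarith
    · exact h0
  refine ⟨hdvd, by rw [hdiv]; exact hqpos, ?_⟩
  rw [hdiv]
  nlinarith [key, hqa]
end

section
/- If (a,b,c) is a solution of the Markov equation a² + b² + c² = 3abc in positive integers with a ≥ b ≥ c and (b,c) ≠ (1,1), then for f(λ) = λ² − 3bcλ + b² + c² we have f(b) < 0; consequently a > b and the Vieta jump a' = 3bc − a satisfies a' < b. -/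
/-- For a Markov solution with `a ≥ b ≥ c` and `(b,c) ≠ (1,1)`, the polynomial
`f(λ) = λ² − 3bcλ + b² + c²` satisfies `f(b) < 0`, hence `a > b` and the Vieta
jump `a' = 3bc − a` satisfies `a' < b`. -/
theorem markov_descent (a b c : ℤ) (ha : 0 < a) (hb : 0 < b) (hc : 0 < c)
    (h : a ^ 2 + b ^ 2 + c ^ 2 = 3 * a * b * c)
    (hab : a ≥ b) (hbc : b ≥ c) (hne : ¬(b = 1 ∧ c = 1)) :
    b ^ 2 - 3 * b * c * b + b ^ 2 + c ^ 2 < 0 ∧ b < a ∧ 3 * b * c - a < b := by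
  have key : b ^ 2 - 3 * b * c * b + b ^ 2 + c ^ 2 < 0 := by
    by_cases hc1 : c = 1
    · have hb2 : 2 ≤ b := by omega
      subst hc1; nlinarith
    · have hc2 : 2 ≤ c := by omega
      nlinarith
  have hfac : (b - a) * (b - (3 * b * c - a)) = b ^ 2 - 3 * b * c * b + b ^ 2 + c ^ 2 := by
    linear_combination -h
  have hba : b < a := by
    rcases lt_or_eq_of_le hab with h1 | h1
    · exact h1
    · exfalso; rw [h1] at hfac; nlinarith
  refine ⟨key, hba, ?_⟩
  nlinarith [hfac, key, hba]
end

section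
/- Every positive-integer solution (a,b,c) of the Markov equation a² + b² + c² = 3abc can be obtained from (1,1,1) by a finite sequence of the mutations μ₁(a,b,c) = (3bc−a, b, c), μ₂(a,b,c) = (a, 3ac−b, c), μ₃(a,b,c) = (a, b, 3ab−c). -/
def markovMu1 (p : ℤ × ℤ × ℤ) : ℤ × ℤ × ℤ := (3 * p.2.1 * p.2.2 - p.1, p.2.1, p.2.2)
def markovMu2 (p : ℤ × ℤ × ℤ) : ℤ × ℤ × ℤ := (p.1, 3 * p.1 * p.2.2 - p.2.1, p.2.2)
def markovMu3 (p : ℤ × ℤ × ℤ) : ℤ × ℤ × ℤ := (p.1, p.2.1, 3 * p.1 * p.2.1 - p.2.2)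

private lemma markovKeyOrd (a b c : ℤ) (hb : 0 < b) (hc : 0 < c)
    (hcb : c ≤ b) (hba : b ≤ a)
    (h : a ^ 2 + b ^ 2 + c ^ 2 = 3 * a * b * c)
    (hne : ¬(a = 1 ∧ b = 1 ∧ c = 1)) :
    0 < 3 * b * c - a ∧ 3 * b * c - a < a := by
  have ha : 0 < a := lt_of_lt_of_le hb hba
  have ha2 : 2 ≤ a := by
    by_contra hcon
    exact hne ⟨by omega, by omega, by omega⟩
  have hmul : a * (3 * b * c - a) = b ^ 2 + c ^ 2 := by linear_combination -h
  have hpos : 0 < 3 * b * c - a := by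
    nlinarith [sq_nonneg b, sq_nonneg c, mul_pos hb hc]
  refine ⟨hpos, ?_⟩
  have hprod : (a - b) * (a + b - 3 * b * c) = 3 * b ^ 2 * c - 2 * b ^ 2 - c ^ 2 := by
    linear_combination h
  have hRHS : 0 ≤ 3 * b ^ 2 * c - 2 * b ^ 2 - c ^ 2 := by
    nlinarith [mul_nonneg (sub_nonneg.2 hcb) (mul_pos hb hc).le, sq_nonneg (b - c),
      mul_pos hb hc, mul_nonneg (sub_nonneg.2 hcb) hc.le]
  rcases eq_or_lt_of_le hRHS with heq | hlt
  · -- RHS = 0 forces b = c = 1 and a = 2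
    have hc1 : c = 1 := by nlinarith [mul_pos hb hc, sq_nonneg (b - c)]
    have hb1 : b = 1 := by nlinarith
    have ha2' : a = 2 := by nlinarith
    subst hc1; subst hb1; subst ha2'; norm_num
  · -- both factors positive
    have h1 : 0 < a - b := by
      rcases lt_or_ge b a with h' | h'
      · omega
      · exfalso
        have : b = a := le_antisymm hba h'
        nlinarith
    have h2 : 0 < a + b - 3 * b * c := by
      by_contra hcon
      push_neg at hcon
      nlinarith
    omega

private lemma markovKey (a b c : ℤ) (_ha : 0 < a) (hb : 0 < b) (hc : 0 < c)
    (hba : b ≤ a) (hca : c ≤ a)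
    (h : a ^ 2 + b ^ 2 + c ^ 2 = 3 * a * b * c)
    (hne : ¬(a = 1 ∧ b = 1 ∧ c = 1)) :
    0 < 3 * b * c - a ∧ 3 * b * c - a < a := by
  rcases le_total c b with hcb | hbc
  · exact markovKeyOrd a b c hb hc hcb hba h hne
  · have := markovKeyOrd a c b hc hb hbc hca (by linear_combination h) (by tauto)
    have e : 3 * c * b = 3 * b * c := by ring
    rw [e] at this
    exact this

private lemma markovMain : ∀ n : ℕ, ∀ a b c : ℤ, 0 < a → 0 < b → 0 < c →
    a + b + c ≤ (n : ℤ) → a ^ 2 + b ^ 2 + c ^ 2 = 3 * a * b * c →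
    ∃ l : List (ℤ × ℤ × ℤ → ℤ × ℤ × ℤ),
      (∀ f ∈ l, f = markovMu1 ∨ f = markovMu2 ∨ f = markovMu3) ∧
      l.foldl (fun p f => f p) (1, 1, 1) = (a, b, c) := by
  intro n
  induction n with
  | zero => intro a b c ha hb hc hn h; exfalso; push_cast at hn; omega
  | succ n ih =>
    intro a b c ha hb hc hn h
    by_cases h111 : a = 1 ∧ b = 1 ∧ c = 1
    · exact ⟨[], by simp, by simp [h111.1, h111.2.1, h111.2.2]⟩
    · by_cases hA : b ≤ a ∧ c ≤ a
      · obtain ⟨hp, hlt⟩ := markovKey a b c ha hb hc hA.1 hA.2 h h111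
        obtain ⟨l, hl1, hl2⟩ := ih (3 * b * c - a) b c hp hb hc
          (by push_cast at hn ⊢; omega) (by linear_combination h)
        refine ⟨l ++ [markovMu1], ?_, ?_⟩
        · intro f hf
          rcases List.mem_append.1 hf with hf | hf
          · exact hl1 f hf
          · simp at hf; tauto
        · rw [List.foldl_append, hl2]
          simp [markovMu1]
      · by_cases hB : a ≤ b ∧ c ≤ b
        · obtain ⟨hp, hlt⟩ := markovKey b a c hb ha hc hB.1 hB.2
            (by linear_combination h) (by tauto)
          obtain ⟨l, hl1, hl2⟩ := ih a (3 * a * c - b) c ha hp hc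
            (by push_cast at hn ⊢; omega) (by linear_combination h)
          refine ⟨l ++ [markovMu2], ?_, ?_⟩
          · intro f hf
            rcases List.mem_append.1 hf with hf | hf
            · exact hl1 f hf
            · simp at hf; tauto
          · rw [List.foldl_append, hl2]
            simp [markovMu2]
        · have hC : a ≤ c ∧ b ≤ c := by omega
          obtain ⟨hp, hlt⟩ := markovKey c a b hc ha hb hC.1 hC.2
            (by linear_combination h) (by tauto)
          obtain ⟨l, hl1, hl2⟩ := ih a b (3 * a * b - c) ha hb hp
            (by push_cast at hn ⊢; omega) (by linear_combination h)
          refine ⟨l ++ [markovMu3], ?_, ?_⟩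
          · intro f hf
            rcases List.mem_append.1 hf with hf | hf
            · exact hl1 f hf
            · simp at hf; tauto
          · rw [List.foldl_append, hl2]
            simp [markovMu3]

/-- Markov's theorem: every positive-integer solution of `a² + b² + c² = 3abc`
is obtained from `(1,1,1)` by a finite sequence of the mutations `μ₁, μ₂, μ₃`. -/
theorem markov_theorem (a b c : ℤ) (ha : 0 < a) (hb : 0 < b) (hc : 0 < c)
    (h : a ^ 2 + b ^ 2 + c ^ 2 = 3 * a * b * c) :
    ∃ l : List (ℤ × ℤ × ℤ → ℤ × ℤ × ℤ),
      (∀ f ∈ l, f = markovMu1 ∨ f = markovMu2 ∨ f = markovMu3) ∧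
      l.foldl (fun p f => f p) (1, 1, 1) = (a, b, c) := by
  exact markovMain (a + b + c).toNat a b c ha hb hc (by omega) h
end

section
/- The map T(a,b,c) = (a² + b⁴ + c⁴ + 2ab² + 2ac²)/(a b² c²) is invariant under the mutation μ₁(a,b,c) = ((b⁴+c⁴)/a, b, c): for all nonzero a,b,c in a field of characteristic 0, T((b⁴+c⁴)/a, b, c) = T(a,b,c). -/
/-- The invariant `T(a,b,c) = (a² + b⁴ + c⁴ + 2ab² + 2ac²)/(a b² c²)` is invariant
under `μ₁(a,b,c) = ((b⁴+c⁴)/a, b, c)`. -/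
theorem variant_invariant_mu1 {K : Type*} [Field K] [CharZero K]
    (a b c : K) (ha : a ≠ 0) (hb : b ≠ 0) (hc : c ≠ 0) (h : b ^ 4 + c ^ 4 ≠ 0) :
    (((b ^ 4 + c ^ 4) / a) ^ 2 + b ^ 4 + c ^ 4 + 2 * ((b ^ 4 + c ^ 4) / a) * b ^ 2
        + 2 * ((b ^ 4 + c ^ 4) / a) * c ^ 2) / (((b ^ 4 + c ^ 4) / a) * b ^ 2 * c ^ 2)
      = (a ^ 2 + b ^ 4 + c ^ 4 + 2 * a * b ^ 2 + 2 * a * c ^ 2) / (a * b ^ 2 * c ^ 2) := by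
  rw [div_eq_div_iff (by simp [ha, hb, hc, h, div_ne_zero]) (by simp [ha, hb, hc])]
  field_simp
  ring
end

section
/- The map T(a,b,c) = (a² + b⁴ + c⁴ + 2ab² + 2ac²)/(a b² c²) is invariant under the mutation μ₂(a,b,c) = (a, (a+c²)/b, c): for all nonzero a,b,c in a field of characteristic 0, T(a, (a+c²)/b, c) = T(a,b,c). -/
/-- The invariant `T(a,b,c) = (a² + b⁴ + c⁴ + 2ab² + 2ac²)/(a b² c²)` is invariant
under `μ₂(a,b,c) = (a, (a+c²)/b, c)`. -/
theorem variant_invariant_mu2 {K : Type*} [Field K] [CharZero K]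
    (a b c : K) (ha : a ≠ 0) (hb : b ≠ 0) (hc : c ≠ 0) (h : a + c ^ 2 ≠ 0) :
    (a ^ 2 + ((a + c ^ 2) / b) ^ 4 + c ^ 4 + 2 * a * ((a + c ^ 2) / b) ^ 2
        + 2 * a * c ^ 2) / (a * ((a + c ^ 2) / b) ^ 2 * c ^ 2)
      = (a ^ 2 + b ^ 4 + c ^ 4 + 2 * a * b ^ 2 + 2 * a * c ^ 2) / (a * b ^ 2 * c ^ 2) := by
  have hd1 : a * ((a + c ^ 2) / b) ^ 2 * c ^ 2 ≠ 0 := by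
    exact mul_ne_zero (mul_ne_zero ha (pow_ne_zero 2 (div_ne_zero h hb))) (pow_ne_zero 2 hc)
  have hd2 : a * b ^ 2 * c ^ 2 ≠ 0 :=
    mul_ne_zero (mul_ne_zero ha (pow_ne_zero 2 hb)) (pow_ne_zero 2 hc)
  rw [div_eq_div_iff hd1 hd2]
  field_simp
  ring
end

section
/- If positive integers a, b, c satisfy a² + b⁴ + c⁴ + 2ab² + 2ac² = 7ab²c², then a' = (b⁴+c⁴)/a is a positive integer and (a', b, c) satisfies the same equation. -/
/-- Vieta jump in the first coordinate for `a² + b⁴ + c⁴ + 2ab² + 2ac² = 7ab²c²`: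
`a' = (b⁴+c⁴)/a` is a positive integer and `(a',b,c)` is again a solution. -/
theorem variant_vieta_jump_a (a b c : ℕ) (ha : 0 < a) (hb : 0 < b) (hc : 0 < c)
    (h : a ^ 2 + b ^ 4 + c ^ 4 + 2 * a * b ^ 2 + 2 * a * c ^ 2 = 7 * a * b ^ 2 * c ^ 2) :
    a ∣ b ^ 4 + c ^ 4 ∧ 0 < (b ^ 4 + c ^ 4) / a ∧
      ((b ^ 4 + c ^ 4) / a) ^ 2 + b ^ 4 + c ^ 4 + 2 * ((b ^ 4 + c ^ 4) / a) * b ^ 2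
          + 2 * ((b ^ 4 + c ^ 4) / a) * c ^ 2
        = 7 * ((b ^ 4 + c ^ 4) / a) * b ^ 2 * c ^ 2 := by
  have hb4 : 0 < b ^ 4 + c ^ 4 := by positivity
  have hge : a + 2 * b ^ 2 + 2 * c ^ 2 ≤ 7 * b ^ 2 * c ^ 2 := by
    by_contra hlt
    push_neg at hlt
    nlinarith [(Nat.mul_lt_mul_left ha).mpr hlt]
  set m := 7 * b ^ 2 * c ^ 2 - (a + 2 * b ^ 2 + 2 * c ^ 2) with hm
  have hsum : m + (a + 2 * b ^ 2 + 2 * c ^ 2) = 7 * b ^ 2 * c ^ 2 :=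
    Nat.sub_add_cancel hge
  have key : a * m = b ^ 4 + c ^ 4 := by nlinarith [hsum]
  have hdvd : a ∣ b ^ 4 + c ^ 4 := ⟨m, key.symm⟩
  have hq : (b ^ 4 + c ^ 4) / a = m := by
    rw [← key, Nat.mul_div_cancel_left _ ha]
  have hmpos : 0 < m := by
    rcases Nat.eq_zero_or_pos m with h0 | h0
    · simp [h0] at key; omega
    · exact h0
  refine ⟨hdvd, hq ▸ hmpos, ?_⟩
  rw [hq]
  nlinarith [hsum, key]
end

section
/- If positive integers a, b, c satisfy a² + b⁴ + c⁴ + 2ab² + 2ac² = 7ab²c², then b divides a + c², so b' = (a+c²)/b is a positive integer, and (a, b', c) satisfies the same equation. -/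
/-- Vieta jump in the second coordinate for `a² + b⁴ + c⁴ + 2ab² + 2ac² = 7ab²c²`:
`b` divides `a + c²`, so `b' = (a+c²)/b` is a positive integer, and `(a,b',c)` is
again a solution. -/
theorem variant_vieta_jump_b (a b c : ℕ) (ha : 0 < a) (hb : 0 < b) (hc : 0 < c)
    (h : a ^ 2 + b ^ 4 + c ^ 4 + 2 * a * b ^ 2 + 2 * a * c ^ 2 = 7 * a * b ^ 2 * c ^ 2) :
    b ∣ a + c ^ 2 ∧ 0 < (a + c ^ 2) / b ∧
      a ^ 2 + ((a + c ^ 2) / b) ^ 4 + c ^ 4 + 2 * a * ((a + c ^ 2) / b) ^ 2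
          + 2 * a * c ^ 2
        = 7 * a * ((a + c ^ 2) / b) ^ 2 * c ^ 2 := by
  have h1 : (a + c ^ 2) ^ 2 + b ^ 2 * (b ^ 2 + 2 * a) = b ^ 2 * (7 * a * c ^ 2) := by
    zify at h ⊢
    linear_combination h
  have hdvd2 : b ^ 2 ∣ (a + c ^ 2) ^ 2 := by
    have : b ^ 2 ∣ (a + c ^ 2) ^ 2 + b ^ 2 * (b ^ 2 + 2 * a) := h1 ▸ Dvd.intro _ rfl
    exact (Nat.dvd_add_right (Dvd.intro _ rfl)).mp (by rwa [Nat.add_comm] at this)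
  have hdvd : b ∣ a + c ^ 2 := (Nat.pow_dvd_pow_iff two_ne_zero).mp hdvd2
  obtain ⟨k, hk⟩ := hdvd
  have hkdiv : (a + c ^ 2) / b = k := by rw [hk]; exact Nat.mul_div_cancel_left k hb
  have hkpos : 0 < k := by
    rcases Nat.eq_zero_or_pos k with h0 | h0
    · simp [h0] at hk; omega
    · exact h0
  have key : k ^ 2 + b ^ 2 + 2 * a = 7 * a * c ^ 2 := by
    have h2 : b ^ 2 * (k ^ 2 + b ^ 2 + 2 * a) = b ^ 2 * (7 * a * c ^ 2) := by
      rw [← h1, hk]; ring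
    exact Nat.eq_of_mul_eq_mul_left (by positivity) h2
  refine ⟨⟨k, hk⟩, by omega, ?_⟩
  rw [hkdiv]
  have : a ^ 2 + k ^ 4 + c ^ 4 + 2 * a * k ^ 2 + 2 * a * c ^ 2
      = (a + c ^ 2) ^ 2 + k ^ 2 * (k ^ 2 + 2 * a) := by ring
  rw [this, hk]
  calc (b * k) ^ 2 + k ^ 2 * (k ^ 2 + 2 * a) = k ^ 2 * (k ^ 2 + b ^ 2 + 2 * a) := by ring
    _ = 7 * a * k ^ 2 * c ^ 2 := by rw [key]; ring
end

section
/- If positive integers A, B, C satisfy A² + B² + C² + 2AB + 2AC = 7ABC, then A' = (B²+C²)/A = 7BC − 2B − 2C − A is a positive integer and (A', B, C) satisfies the same equation. -/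
/-- Vieta jump for the auxiliary equation `A² + B² + C² + 2AB + 2AC = 7ABC`:
`A' = (B²+C²)/A = 7BC − 2B − 2C − A` is a positive integer and `(A',B,C)` is again
a solution. -/
theorem aux_vieta_jump_A (A B C : ℤ) (hA : 0 < A) (hB : 0 < B) (hC : 0 < C)
    (h : A ^ 2 + B ^ 2 + C ^ 2 + 2 * A * B + 2 * A * C = 7 * A * B * C) :
    ∃ A' : ℤ, A * A' = B ^ 2 + C ^ 2 ∧ A' = 7 * B * C - 2 * B - 2 * C - A ∧
      0 < A' ∧
      A' ^ 2 + B ^ 2 + C ^ 2 + 2 * A' * B + 2 * A' * C = 7 * A' * B * C := by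
  refine ⟨7 * B * C - 2 * B - 2 * C - A, by linarith [h], rfl, ?_, ?_⟩
  · have hprod : A * (7 * B * C - 2 * B - 2 * C - A) = B ^ 2 + C ^ 2 := by linarith
    nlinarith [hprod, mul_pos hB hB, mul_pos hC hC]
  · nlinarith [h]
end

section
/- If positive integers A, B, C satisfy A² + B² + C² + 2AB + 2AC = 7ABC with A ≥ B ≥ C and (B,C) ≠ (1,1), then f(B) < 0 where f(λ) = λ² + (2B+2C−7BC)λ + B² + C²; hence A > B and the Vieta jump A' = 7BC − 2B − 2C − A satisfies A' < B. -/
/-- Descent in the first coordinate for `A² + B² + C² + 2AB + 2AC = 7ABC`: if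
`A ≥ B ≥ C` and `(B,C) ≠ (1,1)`, then `f(B) < 0` where
`f(λ) = λ² + (2B+2C−7BC)λ + B² + C²`, hence `A > B` and the Vieta jump
`A' = 7BC − 2B − 2C − A` satisfies `A' < B`. -/
theorem aux_descent_A (A B C : ℤ) (hA : 0 < A) (hB : 0 < B) (hC : 0 < C)
    (h : A ^ 2 + B ^ 2 + C ^ 2 + 2 * A * B + 2 * A * C = 7 * A * B * C)
    (hAB : A ≥ B) (hBC : B ≥ C) (hne : ¬(B = 1 ∧ C = 1)) :
    B ^ 2 + (2 * B + 2 * C - 7 * B * C) * B + B ^ 2 + C ^ 2 < 0 ∧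
      B < A ∧ 7 * B * C - 2 * B - 2 * C - A < B := by
  have hfB : B ^ 2 + (2 * B + 2 * C - 7 * B * C) * B + B ^ 2 + C ^ 2 < 0 := by
    rcases lt_or_ge C 2 with hC2 | hC2
    · have hC1 : C = 1 := le_antisymm (by omega) hC
      have hB2 : 2 ≤ B := by
        rcases lt_or_ge B 2 with hb | hb
        · exact absurd ⟨by omega, hC1⟩ hne
        · exact hb
      nlinarith
    · nlinarith [sq_nonneg (B - C), mul_pos hB hC]
  have hfA : A ^ 2 + (2 * B + 2 * C - 7 * B * C) * A + B ^ 2 + C ^ 2 = 0 := by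
    linarith [h, (by ring : (2 * B + 2 * C - 7 * B * C) * A = 2 * A * B + 2 * A * C - 7 * A * B * C)]
  have hBA : B < A := by
    rcases lt_or_ge B A with h1 | h1
    · exact h1
    · have : A = B := le_antisymm h1 hAB
      subst this
      linarith
  refine ⟨hfB, hBA, ?_⟩
  nlinarith [hfB, hfA, hBA, mul_pos (sub_pos.mpr hBA) (sub_pos.mpr hBA)]
end

section
/- If positive integers A, B, C satisfy A² + B² + C² + 2AB + 2AC = 7ABC with A < B, B ≥ C, and (A,C) ≠ (1,1), then g(λ) = λ² + (2A − 7AC)λ + (A+C)² satisfies: if C ≤ A then g(A) < 0, and if A ≤ C then g(C) < 0; in either case the Vieta jump B' = 7AC − 2A − B satisfies B' < B and max(A,B',C) < B. -/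
/-- Descent in the second coordinate for `A² + B² + C² + 2AB + 2AC = 7ABC`: if
`A < B`, `B ≥ C` and `(A,C) ≠ (1,1)`, then with `g(λ) = λ² + (2A−7AC)λ + (A+C)²`
we have `g(A) < 0` when `C ≤ A` and `g(C) < 0` when `A ≤ C`; in either case the
Vieta jump `B' = 7AC − 2A − B` satisfies `B' < B` and `max(A,B',C) < B`. -/
theorem aux_descent_B (A B C : ℤ) (hA : 0 < A) (hB : 0 < B) (hC : 0 < C)
    (h : A ^ 2 + B ^ 2 + C ^ 2 + 2 * A * B + 2 * A * C = 7 * A * B * C)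
    (hAB : A < B) (hBC : B ≥ C) (hne : ¬(A = 1 ∧ C = 1)) :
    (C ≤ A → A ^ 2 + (2 * A - 7 * A * C) * A + (A + C) ^ 2 < 0) ∧
    (A ≤ C → C ^ 2 + (2 * A - 7 * A * C) * C + (A + C) ^ 2 < 0) ∧
    7 * A * C - 2 * A - B < B ∧
    max A (max (7 * A * C - 2 * A - B) C) < B := by
  have key : 2 ≤ A ∨ 2 ≤ C := by
    by_contra hcon
    push_neg at hcon
    exact hne ⟨by omega, by omega⟩
  have g1 : C ≤ A → A ^ 2 + (2 * A - 7 * A * C) * A + (A + C) ^ 2 < 0 := by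
    intro hCA
    have hA2 : 2 ≤ A := by omega
    nlinarith [mul_pos hA hC, sq_nonneg (A - C), mul_le_mul_of_nonneg_left hCA (le_of_lt hA)]
  have g2 : A ≤ C → C ^ 2 + (2 * A - 7 * A * C) * C + (A + C) ^ 2 < 0 := by
    intro hAC
    rcases key with h2 | h2
    · nlinarith [mul_pos hA hC, sq_nonneg (A - C)]
    · nlinarith [mul_pos hA hC, sq_nonneg (A - C)]
  have hfac : ∀ x : ℤ, (x - B) * (x - (7 * A * C - 2 * A - B))
      = x ^ 2 + (2 * A - 7 * A * C) * x + (A + C) ^ 2 := by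
    intro x; linear_combination -h
  rcases le_total C A with hCA | hAC
  · have hg := g1 hCA
    have hB'A : 7 * A * C - 2 * A - B < A := by
      by_contra hle
      push_neg at hle
      nlinarith [hfac A, mul_nonneg (by linarith : (0:ℤ) ≤ B - A)
        (by linarith : (0:ℤ) ≤ (7 * A * C - 2 * A - B) - A)]
    exact ⟨fun _ => hg, g2, by omega, by omega⟩
  · have hg := g2 hAC
    have hCB : C < B := by
      rcases eq_or_lt_of_le hBC.ge.ge with hEq | hlt
      · exfalso
        have := hfac C
        rw [hEq] at this
        simp at this
        nlinarith [hfac C]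
      · exact hlt
    have hB'C : 7 * A * C - 2 * A - B < C := by
      by_contra hle
      push_neg at hle
      nlinarith [hfac C, mul_nonneg (by linarith : (0:ℤ) ≤ B - C)
        (by linarith : (0:ℤ) ≤ (7 * A * C - 2 * A - B) - C)]
    exact ⟨g1, fun _ => hg, by omega, by omega⟩
end

section
/- Every positive-integer solution (A,B,C) of A² + B² + C² + 2AB + 2AC = 7ABC can be obtained from (1,1,1) by a finite sequence of the maps τ₁(A,B,C) = ((B²+C²)/A, B, C), τ₂(A,B,C) = (A, (A+C)²/B, C), τ₃(A,B,C) = (A, B, (A+B)²/C), and moreover each intermediate triple has its second and third coordinates perfect squares (starting from step 1). -/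
/-!
Viewed as a monic quadratic in one coordinate, the equation has a second integer root (Vieta),
and replacing a coordinate by that root is undone by the corresponding `τᵢ`. Unless the
solution is `(1,1,1)`, one of the three jumps strictly decreases `A + B + C`, so descent gives a
chain of `τ`-moves from `(1,1,1)`. Along the way squares propagate: `τ₂` turns `B'` into `B`
with `B' B = (A + C)²`, so `B` is a square whenever `B'` is (likewise for `τ₃`), while `τ₁`
leaves `B` and `C` alone.
-/

def auxTau1 (p : ℤ × ℤ × ℤ) : ℤ × ℤ × ℤ :=
  ((p.2.1 ^ 2 + p.2.2 ^ 2) / p.1, p.2.1, p.2.2)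
def auxTau2 (p : ℤ × ℤ × ℤ) : ℤ × ℤ × ℤ :=
  (p.1, (p.1 + p.2.2) ^ 2 / p.2.1, p.2.2)
def auxTau3 (p : ℤ × ℤ × ℤ) : ℤ × ℤ × ℤ :=
  (p.1, p.2.1, (p.1 + p.2.1) ^ 2 / p.2.2)

section Vieta

variable {R : Type*} [CommRing R] [LinearOrder R] [IsStrictOrderedRing R]

theorem exists_smaller_root {x s q : R} (hx : 0 < x) (hq : 0 < q) (h : x ^ 2 + q = s * x)
    (hlt : q < x ^ 2) : ∃ y, 0 < y ∧ y < x ∧ y ^ 2 + q = s * y ∧ y * x = q := by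
  have hmul : (s - x) * x = q := by linear_combination -h
  refine ⟨s - x, pos_of_mul_pos_left (hmul ▸ hq) hx.le, ?_, by linear_combination h, hmul⟩
  exact lt_of_mul_lt_mul_right (by rw [hmul, ← sq]; exact hlt) hx.le

end Vieta

theorem IsSquare.of_mul_eq_sq {R : Type*} [CommRing R] [IsDomain R] [IsIntegrallyClosed R]
    {a b d : R} (ha : IsSquare a) (ha0 : a ≠ 0) (h : a * b = d ^ 2) : IsSquare b := by
  obtain ⟨r, rfl⟩ := ha
  have hr : r ≠ 0 := fun hr => ha0 (by simp [hr])
  obtain ⟨k, rfl⟩ : r ∣ d :=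
    (IsIntegrallyClosed.pow_dvd_pow_iff two_ne_zero).1 ⟨b, by rw [← h]; ring⟩
  exact ⟨k, mul_left_cancel₀ (mul_ne_zero hr hr) (by rw [h]; ring)⟩

namespace SevenABC

def IsSolution (A B C : ℤ) : Prop :=
  A ^ 2 + B ^ 2 + C ^ 2 + 2 * A * B + 2 * A * C = 7 * A * B * C

def IsTau (f : ℤ × ℤ × ℤ → ℤ × ℤ × ℤ) : Prop :=
  f = auxTau1 ∨ f = auxTau2 ∨ f = auxTau3

def IsSquareChain (l : List (ℤ × ℤ × ℤ → ℤ × ℤ × ℤ)) (p : ℤ × ℤ × ℤ) : Prop :=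
  (∀ f ∈ l, IsTau f) ∧ l.foldl (fun p f => f p) (1, 1, 1) = p ∧
    ∀ n, 1 ≤ n → n ≤ l.length →
      IsSquare ((l.take n).foldl (fun p f => f p) (1, 1, 1)).2.1 ∧
      IsSquare ((l.take n).foldl (fun p f => f p) (1, 1, 1)).2.2

theorem IsSquareChain.nil : IsSquareChain [] (1, 1, 1) :=
  ⟨by simp, rfl, fun n h₁ h₂ => absurd (h₁.trans h₂) (by simp)⟩

theorem IsSquareChain.append_singleton {l : List (ℤ × ℤ × ℤ → ℤ × ℤ × ℤ)} {p : ℤ × ℤ × ℤ}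
    {g : ℤ × ℤ × ℤ → ℤ × ℤ × ℤ} (hl : IsSquareChain l p) (hg : IsTau g)
    (hsq₁ : IsSquare (g p).2.1) (hsq₂ : IsSquare (g p).2.2) : IsSquareChain (l ++ [g]) (g p) := by
  obtain ⟨hτ, hfold, hsq⟩ := hl
  have hfold' : (l ++ [g]).foldl (fun p f => f p) (1, 1, 1) = g p := by simp [hfold]
  refine ⟨fun f hf => ?_, hfold', fun n h₁ h₂ => ?_⟩
  · rcases List.mem_append.1 hf with hf | hf
    exacts [hτ f hf, List.mem_singleton.1 hf ▸ hg]
  rcases Nat.lt_or_ge n (l.length + 1) with hn | hn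
  · rw [List.take_append_of_le_length (by omega)]
    exact hsq n h₁ (by omega)
  · rw [List.take_of_length_le (by simpa using hn), hfold']
    exact ⟨hsq₁, hsq₂⟩

variable {A B C : ℤ}

theorem isSolution_iff_quadratic₁ :
    IsSolution A B C ↔ A ^ 2 + (B ^ 2 + C ^ 2) = (7 * B * C - 2 * B - 2 * C) * A := by
  unfold IsSolution; constructor <;> intro h <;> linear_combination h

theorem isSolution_iff_quadratic₂ :
    IsSolution A B C ↔ B ^ 2 + (A + C) ^ 2 = (7 * A * C - 2 * A) * B := by
  unfold IsSolution; constructor <;> intro h <;> linear_combination h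

theorem isSolution_iff_quadratic₃ :
    IsSolution A B C ↔ C ^ 2 + (A + B) ^ 2 = (7 * A * B - 2 * A) * C := by
  unfold IsSolution; constructor <;> intro h <;> linear_combination h

/- If no Vieta jump decreases the triple, then `|B - C| ≤ A` and `A² ≤ B² + C²` squeeze
`B + C = A + 1` and `B C = A`, and the equation leaves only `A = 1`. -/
theorem eq_one_of_le_of_le_of_le (hA : 0 < A) (hB : 0 < B) (hC : 0 < C) (h : IsSolution A B C)
    (h₁ : A ^ 2 ≤ B ^ 2 + C ^ 2) (h₂ : B ^ 2 ≤ (A + C) ^ 2) (h₃ : C ^ 2 ≤ (A + B) ^ 2) :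
    A = 1 ∧ B = 1 ∧ C = 1 := by
  have hBle : B ≤ A + C := (pow_le_pow_iff_left₀ hB.le (by positivity) two_ne_zero).1 h₂
  have hCle : C ≤ A + B := (pow_le_pow_iff_left₀ hC.le (by positivity) two_ne_zero).1 h₃
  have key : (A + B + C) ^ 2 = B * C * (7 * A + 2) := by
    unfold IsSolution at h; linear_combination h
  have hlow : (B + C) ^ 2 - A ^ 2 ≤ 4 * (B * C) := by nlinarith
  have hhigh : 2 * (B * C) ≤ (B + C) ^ 2 - A ^ 2 := by nlinarith
  -- `hlow` and `key`, divided by `A + B + C`, force `B + C - A ≤ 1`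
  have hd : (B + C - A) * (7 * A + 2) ≤ 4 * (A + B + C) := by
    refine le_of_mul_le_mul_right ?_ (by positivity : 0 < A + B + C)
    nlinarith [mul_le_mul_of_nonneg_right hlow (by positivity : (0 : ℤ) ≤ 7 * A + 2)]
  have hsum : B + C = A + 1 := by
    have : A < B + C := by nlinarith
    nlinarith
  have hprod : B * C = A := by
    have hge : A ≤ B * C := by
      nlinarith [mul_nonneg (by linarith : (0 : ℤ) ≤ B - 1) (by linarith : (0 : ℤ) ≤ C - 1)]
    have hle : 2 * (B * C) ≤ 2 * A + 1 := by rw [hsum] at hhigh; linear_combination hhigh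
    omega
  have hA1 : A = 1 := by
    rw [hprod, show A + B + C = 2 * A + 1 by linarith] at key
    have : (A - 1) * (3 * A + 1) = 0 := by linear_combination -key
    rcases mul_eq_zero.1 this with h | h <;> linarith
  subst hA1
  have hB1 : B = 1 := by nlinarith
  exact ⟨rfl, hB1, by linarith⟩

theorem exists_tau_pred (hA : 0 < A) (hB : 0 < B) (hC : 0 < C) (h : IsSolution A B C)
    (hne : (A, B, C) ≠ (1, 1, 1)) :
    ∃ A' B' C' : ℤ, ∃ g : ℤ × ℤ × ℤ → ℤ × ℤ × ℤ, IsTau g ∧ g (A', B', C') = (A, B, C) ∧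
      0 < A' ∧ 0 < B' ∧ 0 < C' ∧ IsSolution A' B' C' ∧ A' + B' + C' < A + B + C ∧
      (IsSquare B' → IsSquare C' → IsSquare B ∧ IsSquare C) := by
  by_cases h₁ : B ^ 2 + C ^ 2 < A ^ 2
  · obtain ⟨A', hA', hlt, hroot, hmul⟩ :=
      exists_smaller_root hA (by positivity) (isSolution_iff_quadratic₁.1 h) h₁
    refine ⟨A', B, C, auxTau1, Or.inl rfl, ?_, hA', hB, hC, isSolution_iff_quadratic₁.2 hroot,
      by linarith, fun hsB hsC => ⟨hsB, hsC⟩⟩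
    simp only [auxTau1, ← hmul, Int.mul_ediv_cancel_left _ hA'.ne']
  by_cases h₂ : (A + C) ^ 2 < B ^ 2
  · obtain ⟨B', hB', hlt, hroot, hmul⟩ :=
      exists_smaller_root hB (by positivity) (isSolution_iff_quadratic₂.1 h) h₂
    refine ⟨A, B', C, auxTau2, Or.inr (Or.inl rfl), ?_, hA, hB', hC,
      isSolution_iff_quadratic₂.2 hroot, by linarith,
      fun hsB' hsC => ⟨hsB'.of_mul_eq_sq hB'.ne' hmul, hsC⟩⟩
    simp only [auxTau2, ← hmul, Int.mul_ediv_cancel_left _ hB'.ne']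
  by_cases h₃ : (A + B) ^ 2 < C ^ 2
  · obtain ⟨C', hC', hlt, hroot, hmul⟩ :=
      exists_smaller_root hC (by positivity) (isSolution_iff_quadratic₃.1 h) h₃
    refine ⟨A, B, C', auxTau3, Or.inr (Or.inr rfl), ?_, hA, hB, hC',
      isSolution_iff_quadratic₃.2 hroot, by linarith,
      fun hsB hsC' => ⟨hsB, hsC'.of_mul_eq_sq hC'.ne' hmul⟩⟩
    simp only [auxTau3, ← hmul, Int.mul_ediv_cancel_left _ hC'.ne']
  obtain ⟨rfl, rfl, rfl⟩ :=
    eq_one_of_le_of_le_of_le hA hB hC h (not_lt.1 h₁) (not_lt.1 h₂) (not_lt.1 h₃)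
  exact absurd rfl hne

theorem exists_isSquareChain {A B C : ℤ} (hA : 0 < A) (hB : 0 < B) (hC : 0 < C)
    (h : IsSolution A B C) :
    IsSquare B ∧ IsSquare C ∧ ∃ l, IsSquareChain l (A, B, C) := by
  by_cases hne : (A, B, C) = (1, 1, 1)
  · obtain ⟨rfl, rfl, rfl⟩ : A = 1 ∧ B = 1 ∧ C = 1 := by simpa only [Prod.mk.injEq] using hne
    exact ⟨IsSquare.one, IsSquare.one, [], .nil⟩
  obtain ⟨A', B', C', g, hg, hgp, hA', hB', hC', h', hlt, hsq⟩ :=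
    exists_tau_pred hA hB hC h hne
  obtain ⟨hsB', hsC', l, hl⟩ := exists_isSquareChain hA' hB' hC' h'
  obtain ⟨hsB, hsC⟩ := hsq hsB' hsC'
  refine ⟨hsB, hsC, l ++ [g], ?_⟩
  rw [← hgp]
  exact hl.append_singleton hg (by rwa [hgp]) (by rwa [hgp])
termination_by (A + B + C).toNat
decreasing_by omega

end SevenABC

/-- Every positive-integer solution of `A² + B² + C² + 2AB + 2AC = 7ABC` is
obtained from `(1,1,1)` by a finite sequence of the maps `τ₁, τ₂, τ₃`, and every
intermediate triple (from step 1 on) has second and third coordinates perfect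
squares. -/
theorem aux_theorem (A B C : ℤ) (hA : 0 < A) (hB : 0 < B) (hC : 0 < C)
    (h : A ^ 2 + B ^ 2 + C ^ 2 + 2 * A * B + 2 * A * C = 7 * A * B * C) :
    ∃ l : List (ℤ × ℤ × ℤ → ℤ × ℤ × ℤ),
      (∀ f ∈ l, f = auxTau1 ∨ f = auxTau2 ∨ f = auxTau3) ∧
      l.foldl (fun p f => f p) (1, 1, 1) = (A, B, C) ∧
      ∀ n, 1 ≤ n → n ≤ l.length →
        IsSquare ((l.take n).foldl (fun p f => f p) (1, 1, 1)).2.1 ∧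
        IsSquare ((l.take n).foldl (fun p f => f p) (1, 1, 1)).2.2 := by
  obtain ⟨-, -, hl⟩ := SevenABC.exists_isSquareChain hA hB hC h
  exact hl
end

section
/- Every positive-integer solution (a,b,c) of a² + b⁴ + c⁴ + 2ab² + 2ac² = 7ab²c² can be obtained from (1,1,1) by a finite sequence of the mutations μ₁(a,b,c) = ((b⁴+c⁴)/a, b, c), μ₂(a,b,c) = (a, (a+c²)/b, c), μ₃(a,b,c) = (a, b, (a+b²)/c). -/
def variantMu1 (p : ℤ × ℤ × ℤ) : ℤ × ℤ × ℤ :=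
  ((p.2.1 ^ 4 + p.2.2 ^ 4) / p.1, p.2.1, p.2.2)
def variantMu2 (p : ℤ × ℤ × ℤ) : ℤ × ℤ × ℤ :=
  (p.1, (p.1 + p.2.2 ^ 2) / p.2.1, p.2.2)
def variantMu3 (p : ℤ × ℤ × ℤ) : ℤ × ℤ × ℤ :=
  (p.1, p.2.1, (p.1 + p.2.1 ^ 2) / p.2.2)


lemma key' (a b c : ℤ) (ha : 1 ≤ a) (hb : 1 ≤ b) (hc : 1 ≤ c) (hcb : c ≤ b)
    (h : a ^ 2 + b ^ 4 + c ^ 4 + 2 * a * b ^ 2 + 2 * a * c ^ 2 = 7 * a * b ^ 2 * c ^ 2)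
    (h1 : a ^ 2 ≤ b ^ 4 + c ^ 4) (h2 : b ^ 2 ≤ a + c ^ 2) :
    a = 1 ∧ b = 1 ∧ c = 1 := by
  have hP : a * (7 * b ^ 2 * c ^ 2 - 2 * b ^ 2 - 2 * c ^ 2 - a) = b ^ 4 + c ^ 4 := by
    linear_combination - h
  have hv1 : 1 ≤ c ^ 2 := by nlinarith
  have hu1 : 1 ≤ b ^ 2 := by nlinarith
  have hvu : c ^ 2 ≤ b ^ 2 := by nlinarith
  have haA : a ≤ 7 * b ^ 2 * c ^ 2 - 2 * b ^ 2 - 2 * c ^ 2 - a := by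
    by_contra hlt
    push_neg at hlt
    have hmm : a * ((7 * b ^ 2 * c ^ 2 - 2 * b ^ 2 - 2 * c ^ 2 - a) + 1) ≤ a * a :=
      mul_le_mul_of_nonneg_left (by linarith) (by linarith)
    linarith [hP, h1, hmm]
  have hf : 0 ≤ (a - (b ^ 2 - c ^ 2)) * ((7 * b ^ 2 * c ^ 2 - 2 * b ^ 2 - 2 * c ^ 2 - a) - (b ^ 2 - c ^ 2)) :=
    mul_nonneg (by linarith) (by linarith)
  have hb2 : (0:ℤ) < b ^ 2 := by positivity
  have hq0 : b ^ 2 * 0 ≤ b ^ 2 * (4 * b ^ 2 - 2 * c ^ 2 - 7 * b ^ 2 * c ^ 2 + 7 * c ^ 4) := by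
    nlinarith [hf, hP]
  have hq : 0 ≤ 4 * b ^ 2 - 2 * c ^ 2 - 7 * b ^ 2 * c ^ 2 + 7 * c ^ 4 :=
    le_of_mul_le_mul_left hq0 hb2
  have h5 : 3 * b ^ 2 ≤ 5 * c ^ 2 := by
    by_contra hcon
    push_neg at hcon
    have hp : 0 ≤ (3 * b ^ 2 - 5 * c ^ 2 - 1) * (7 * c ^ 2 - 4) :=
      mul_nonneg (by linarith) (by linarith)
    have hvv : c ^ 2 * 1 ≤ c ^ 2 * c ^ 2 := mul_le_mul_of_nonneg_left hv1 (by linarith)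
    nlinarith [hq, hp, hvv, hv1]
  have hg : 0 ≤ (a - 1) * ((7 * b ^ 2 * c ^ 2 - 2 * b ^ 2 - 2 * c ^ 2 - a) - 1) :=
    mul_nonneg (by linarith) (by linarith)
  have h7 : 7 * b ^ 2 * c ^ 2 ≤ 1 + b ^ 4 + c ^ 4 + 2 * b ^ 2 + 2 * c ^ 2 := by
    nlinarith [hg, hP]
  have hc1 : c = 1 := by
    by_contra hcc
    have hc2 : 2 ≤ c := by omega
    have hv4 : 4 ≤ c ^ 2 := by nlinarith
    have p1 : 3 * b ^ 2 * b ^ 2 ≤ 5 * c ^ 2 * b ^ 2 :=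
      mul_le_mul_of_nonneg_right h5 (by linarith)
    have p2 : 3 * (c ^ 2) * c ^ 2 ≤ 3 * b ^ 2 * c ^ 2 := by
      have := mul_le_mul_of_nonneg_right hvu (show (0:ℤ) ≤ 3 * c ^ 2 by linarith)
      linarith [this]
    have p3 : 4 * b ^ 2 ≤ b ^ 2 * c ^ 2 := by
      have := mul_le_mul_of_nonneg_left hv4 (show (0:ℤ) ≤ b ^ 2 by linarith)
      linarith [this]
    nlinarith [h7, p1, p2, p3, hu1, hv1]
  subst hc1
  have hb1 : b = 1 := by
    by_contra hbb
    have hbge : 2 ≤ b := by omega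
    have : 4 ≤ b ^ 2 := by nlinarith
    linarith [h5, this]
  subst hb1
  have ha2 : a < 2 := by
    by_contra hh
    push_neg at hh
    nlinarith [h1, hh]
  exact ⟨by omega, rfl, rfl⟩

lemma key (a b c : ℤ) (ha : 1 ≤ a) (hb : 1 ≤ b) (hc : 1 ≤ c)
    (h : a ^ 2 + b ^ 4 + c ^ 4 + 2 * a * b ^ 2 + 2 * a * c ^ 2 = 7 * a * b ^ 2 * c ^ 2)
    (h1 : a ^ 2 ≤ b ^ 4 + c ^ 4) (h2 : b ^ 2 ≤ a + c ^ 2) (h3 : c ^ 2 ≤ a + b ^ 2) :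
    a = 1 ∧ b = 1 ∧ c = 1 := by
  rcases le_total c b with hcb | hbc
  · exact key' a b c ha hb hc hcb h h1 h2
  · obtain ⟨h1', h2', h3'⟩ := key' a c b ha hc hb hbc (by linarith) (by linarith) h3
    exact ⟨h1', h3', h2'⟩


lemma aux : ∀ (n : ℕ) (a b c : ℤ), 0 < a → 0 < b → 0 < c →
    a ^ 2 + b ^ 4 + c ^ 4 + 2 * a * b ^ 2 + 2 * a * c ^ 2 = 7 * a * b ^ 2 * c ^ 2 →
    a.natAbs + b.natAbs + c.natAbs ≤ n →
    ∃ l : List (ℤ × ℤ × ℤ → ℤ × ℤ × ℤ),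
      (∀ f ∈ l, f = variantMu1 ∨ f = variantMu2 ∨ f = variantMu3) ∧
      l.foldl (fun p f => f p) (1, 1, 1) = (a, b, c) := by
  intro n
  induction n with
  | zero => intro a b c ha hb hc h hn; omega
  | succ n ih =>
    intro a b c ha hb hc h hn
    rcases lt_or_ge (b ^ 4 + c ^ 4) (a ^ 2) with h1 | h1
    · -- jump a
      set a₀ := 7 * b ^ 2 * c ^ 2 - 2 * b ^ 2 - 2 * c ^ 2 - a with ha₀
      have hP : a₀ * a = b ^ 4 + c ^ 4 := by rw [ha₀]; linear_combination - h
      have ha₀pos : 0 < a₀ := by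
        rcases lt_or_ge 0 a₀ with hp | hp
        · exact hp
        · nlinarith [mul_nonpos_of_nonpos_of_nonneg hp (le_of_lt ha), hP, pow_pos hb 4, pow_pos hc 4]
      have hlt : a₀ < a := by
        by_contra hh
        push_neg at hh
        nlinarith [mul_le_mul_of_nonneg_right hh (le_of_lt ha), hP]
      have hnew : a₀ ^ 2 + b ^ 4 + c ^ 4 + 2 * a₀ * b ^ 2 + 2 * a₀ * c ^ 2 = 7 * a₀ * b ^ 2 * c ^ 2 := by
        rw [ha₀]; linear_combination h
      obtain ⟨l, hl, hfold⟩ := ih a₀ b c ha₀pos hb hc hnew (by omega)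
      refine ⟨l ++ [variantMu1], ?_, ?_⟩
      · intro f hf
        rcases List.mem_append.mp hf with hf | hf
        · exact hl f hf
        · simp at hf; subst hf; left; rfl
      · rw [List.foldl_append, hfold]
        simp only [List.foldl_cons, List.foldl_nil, variantMu1]
        have : (b ^ 4 + c ^ 4) / a₀ = a := by
          rw [← hP]
          exact Int.mul_ediv_cancel_left _ (ne_of_gt ha₀pos)
        simp [this]
    rcases lt_or_ge (a + c ^ 2) (b ^ 2) with h2 | h2
    · -- jump b
      have hdvd2 : b ^ 2 ∣ (a + c ^ 2) ^ 2 :=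
        ⟨7 * a * c ^ 2 - b ^ 2 - 2 * a, by linear_combination h⟩
      have hdvd : b ∣ a + c ^ 2 := (Int.pow_dvd_pow_iff two_ne_zero).mp hdvd2
      obtain ⟨b₀, hbb⟩ := hdvd
      have hb₀pos : 0 < b₀ := by
        rcases lt_or_ge 0 b₀ with hp | hp
        · exact hp
        · nlinarith [mul_nonpos_of_nonneg_of_nonpos (le_of_lt hb) hp, hbb, sq_nonneg c]
      have hlt : b₀ < b := by
        by_contra hh
        push_neg at hh
        nlinarith [mul_le_mul_of_nonneg_left hh (le_of_lt hb), hbb]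
      have hkey : b ^ 2 * (b₀ ^ 2) = b ^ 2 * (7 * a * c ^ 2 - 2 * a - b ^ 2) := by
        linear_combination -(a + c ^ 2 + b * b₀) * hbb + h
      have hb0sq : b₀ ^ 2 = 7 * a * c ^ 2 - 2 * a - b ^ 2 :=
        mul_left_cancel₀ (by positivity) hkey
      have hnew : a ^ 2 + b₀ ^ 4 + c ^ 4 + 2 * a * b₀ ^ 2 + 2 * a * c ^ 2 = 7 * a * b₀ ^ 2 * c ^ 2 := by
        linear_combination (b₀ ^ 2 - b ^ 2) * hb0sq + h
      obtain ⟨l, hl, hfold⟩ := ih a b₀ c ha hb₀pos hc hnew (by omega)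
      refine ⟨l ++ [variantMu2], ?_, ?_⟩
      · intro f hf
        rcases List.mem_append.mp hf with hf | hf
        · exact hl f hf
        · simp at hf; subst hf; right; left; rfl
      · rw [List.foldl_append, hfold]
        simp only [List.foldl_cons, List.foldl_nil, variantMu2]
        have : (a + c ^ 2) / b₀ = b := by
          rw [show a + c ^ 2 = b₀ * b by linarith [hbb]]
          exact Int.mul_ediv_cancel_left _ (ne_of_gt hb₀pos)
        simp [this]
    rcases lt_or_ge (a + b ^ 2) (c ^ 2) with h3 | h3
    · -- jump c
      have hdvd2 : c ^ 2 ∣ (a + b ^ 2) ^ 2 :=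
        ⟨7 * a * b ^ 2 - c ^ 2 - 2 * a, by linear_combination h⟩
      have hdvd : c ∣ a + b ^ 2 := (Int.pow_dvd_pow_iff two_ne_zero).mp hdvd2
      obtain ⟨c₀, hcc⟩ := hdvd
      have hc₀pos : 0 < c₀ := by
        rcases lt_or_ge 0 c₀ with hp | hp
        · exact hp
        · nlinarith [mul_nonpos_of_nonneg_of_nonpos (le_of_lt hc) hp, hcc, sq_nonneg b]
      have hlt : c₀ < c := by
        by_contra hh
        push_neg at hh
        nlinarith [mul_le_mul_of_nonneg_left hh (le_of_lt hc), hcc]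
      have hkey : c ^ 2 * (c₀ ^ 2) = c ^ 2 * (7 * a * b ^ 2 - 2 * a - c ^ 2) := by
        linear_combination -(a + b ^ 2 + c * c₀) * hcc + h
      have hc0sq : c₀ ^ 2 = 7 * a * b ^ 2 - 2 * a - c ^ 2 :=
        mul_left_cancel₀ (by positivity) hkey
      have hnew : a ^ 2 + b ^ 4 + c₀ ^ 4 + 2 * a * b ^ 2 + 2 * a * c₀ ^ 2 = 7 * a * b ^ 2 * c₀ ^ 2 := by
        linear_combination (c₀ ^ 2 - c ^ 2) * hc0sq + h
      obtain ⟨l, hl, hfold⟩ := ih a b c₀ ha hb hc₀pos hnew (by omega)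
      refine ⟨l ++ [variantMu3], ?_, ?_⟩
      · intro f hf
        rcases List.mem_append.mp hf with hf | hf
        · exact hl f hf
        · simp at hf; subst hf; right; right; rfl
      · rw [List.foldl_append, hfold]
        simp only [List.foldl_cons, List.foldl_nil, variantMu3]
        have : (a + b ^ 2) / c₀ = c := by
          rw [show a + b ^ 2 = c₀ * c by linarith [hcc]]
          exact Int.mul_ediv_cancel_left _ (ne_of_gt hc₀pos)
        simp [this]
    · obtain ⟨ha1, hb1, hc1⟩ := key a b c ha hb hc h h1 h2 h3
      exact ⟨[], by simp, by rw [ha1, hb1, hc1]; rfl⟩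

/-- Every positive-integer solution of `a² + b⁴ + c⁴ + 2ab² + 2ac² = 7ab²c²` is
obtained from `(1,1,1)` by a finite sequence of the mutations `μ₁, μ₂, μ₃`. -/
theorem variant_theorem (a b c : ℤ) (ha : 0 < a) (hb : 0 < b) (hc : 0 < c)
    (h : a ^ 2 + b ^ 4 + c ^ 4 + 2 * a * b ^ 2 + 2 * a * c ^ 2 = 7 * a * b ^ 2 * c ^ 2) :
    ∃ l : List (ℤ × ℤ × ℤ → ℤ × ℤ × ℤ),
      (∀ f ∈ l, f = variantMu1 ∨ f = variantMu2 ∨ f = variantMu3) ∧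
      l.foldl (fun p f => f p) (1, 1, 1) = (a, b, c) := by
  exact aux (a.natAbs + b.natAbs + c.natAbs) a b c ha hb hc h le_rfl
end

section
/- The matrix B with rows (0,1,−1), (−4,0,2), (4,−2,0) satisfies μₖ(B) = −B for each k ∈ {1,2,3}, where μₖ is Fomin–Zelevinsky matrix mutation; hence the mutation class of B is {B, −B}. -/
/-- Fomin–Zelevinsky matrix mutation at index `k`. -/
def matMutation (k : Fin 3) (B : Matrix (Fin 3) (Fin 3) ℤ) : Matrix (Fin 3) (Fin 3) ℤ :=
  fun i j =>
    if i = k ∨ j = k then -B i j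
    else B i j + (B i k * |B k j| + |B i k| * B k j) / 2

/-- The matrix `B` with rows `(0,1,−1)`, `(−4,0,2)`, `(4,−2,0)` satisfies
`μₖ(B) = −B` for each `k`; hence its mutation class is `{B, −B}`. -/
theorem variant_matrix_mutation :
    (∀ k : Fin 3, matMutation k !![0, 1, -1; -4, 0, 2; 4, -2, 0]
        = -(!![0, 1, -1; -4, 0, 2; 4, -2, 0])) ∧
    (∀ k : Fin 3, matMutation k (-(!![0, 1, -1; -4, 0, 2; 4, -2, 0]))
        = !![0, 1, -1; -4, 0, 2; 4, -2, 0]) := by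
  constructor <;> intro k <;> fin_cases k <;>
    ext i j <;> fin_cases i <;> fin_cases j <;>
    simp [matMutation, Matrix.of_apply]
end

section
/- The rational function T(u₁,u₂,u₃,u₄,u₅) = (u₁u₂u₅² + u₁²u₄u₅ + u₃u₄²u₅ + u₂²u₃u₅ + u₁u₂u₄² + u₂²u₄u₅ + u₁u₂u₃² + u₁²u₃u₅ + u₃²u₄u₅)/(u₁u₂u₃u₄) is invariant under the mutation μ₁(a,b,c,d,e) = (b, (b²+cd)/a, c, d, e): T(μ₁(a,b,c,d,e)) = T(a,b,c,d,e) for all nonzero a,b,c,d,e in a field of characteristic 0. -/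
/-! After clearing denominators, the two sides differ by `e (c + d) (x - a) (a x - b² - c d)`, a
multiple of the exchange relation `a x = b² + c d` satisfied by the mutated coordinate `x`. -/

/-- The boundary-loop invariant of the once-marked torus minus a disk. -/
noncomputable def torusT {K : Type*} [Field K] (u₁ u₂ u₃ u₄ u₅ : K) : K :=
  (u₁ * u₂ * u₅ ^ 2 + u₁ ^ 2 * u₄ * u₅ + u₃ * u₄ ^ 2 * u₅ + u₂ ^ 2 * u₃ * u₅
      + u₁ * u₂ * u₄ ^ 2 + u₂ ^ 2 * u₄ * u₅ + u₁ * u₂ * u₃ ^ 2 + u₁ ^ 2 * u₃ * u₅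
      + u₃ ^ 2 * u₄ * u₅) / (u₁ * u₂ * u₃ * u₄)

theorem torusT_eq_of_exchange {K : Type*} [Field K] {a b c d e x : K}
    (ha : a ≠ 0) (hb : b ≠ 0) (hc : c ≠ 0) (hd : d ≠ 0) (hx : x ≠ 0)
    (hexchange : a * x = b ^ 2 + c * d) :
    torusT b x c d e = torusT a b c d e := by
  unfold torusT
  field_simp
  linear_combination e * (c + d) * (x - a) * hexchange

theorem torus_invariant_mu1_general {K : Type*} [Field K]
    (a b c d e : K) (ha : a ≠ 0) (hb : b ≠ 0) (hc : c ≠ 0) (hd : d ≠ 0)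
    (h : b ^ 2 + c * d ≠ 0) :
    torusT b ((b ^ 2 + c * d) / a) c d e = torusT a b c d e :=
  torusT_eq_of_exchange ha hb hc hd (div_ne_zero h ha) (mul_div_cancel₀ _ ha)

/-- `torusT` is invariant under the mutation `μ₁(a,b,c,d,e) = (b, (b²+cd)/a, c, d, e)`. -/
theorem torus_invariant_mu1 {K : Type*} [Field K] [CharZero K]
    (a b c d e : K) (ha : a ≠ 0) (hb : b ≠ 0) (hc : c ≠ 0) (hd : d ≠ 0) (he : e ≠ 0)
    (h : b ^ 2 + c * d ≠ 0) :
    torusT b ((b ^ 2 + c * d) / a) c d e = torusT a b c d e :=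
  torus_invariant_mu1_general a b c d e ha hb hc hd h
end
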